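/- In the discrimination experiment corresponding to the 32-Game with qubit states, the success probability is bounded by p_guess ≤ 1/2 + (1/18)·Σᵢ ‖ρᵢ − ρ_{i+1} − ρ_{i+2}‖₁ ≤ 5/6, for any density matrices ρ₀, ρ₁, ρ₂ on ℂ². -/

import Mathlib

open Matrix ComplexOrder

/-- The trace norm ‖A‖₁ = tr √(AᴴA) of a 2×2 complex matrix. -/
noncomputable def traceNorm (A : Matrix (Fin 2) (Fin 2) ℂ) : ℝ :=
  (((Matrix.posSemidef_conjTranspose_mul_self A).1.eigenvectorUnitary.1 *
    diagonal (((↑) : ℝ → ℂ) ∘ (√·) ∘ (Matrix.posSemidef_conjTranspose_mul_self A).1.eigenvalues) *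
    (star (Matrix.posSemidef_conjTranspose_mul_self A).1.eigenvectorUnitary :
      Matrix (Fin 2) (Fin 2) ℂ)).trace).re

/-!
Write `D_b = ρ_b - ρ_{b+1} - ρ_{b+2}`, a Hermitian matrix of trace `-1`. The success probability
equals `2/3 + (1/9) Σ_b Re tr (E_b D_b)`, and splitting `D = D₊ - D₋` into positive and negative
parts gives the Helstrom bound `Re tr (E D) ≤ tr D₊ = (‖D‖₁ + tr D) / 2` for `0 ≤ E ≤ 1`.

For the bound `5/6`: the eigenvalues `a, b` of a `2×2` Hermitian `D` with `a + b = -1` satisfy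
`|a| + |b| ≤ (2 (a² + b²) + 3) / 4`, i.e. `‖D‖₁ ≤ (2 tr D² + 3) / 4`. The identity
`Σ_b D_b² + σ² = 4 Σ_b ρ_b²` with `σ = ρ₀ + ρ₁ + ρ₂`, purity `tr ρ² ≤ 1` and Cauchy–Schwarz
`tr σ² ≥ (tr σ)² / 2 = 9/2` give `Σ_b tr D_b² ≤ 15/2`, hence `Σ_b ‖D_b‖₁ ≤ 6`.
-/

open scoped MatrixOrder

namespace Matrix

variable {n : Type*} [Fintype n] [DecidableEq n]

lemma PosSemidef.re_trace_mul_nonneg {A B : Matrix n n ℂ} (hA : A.PosSemidef)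
    (hB : B.PosSemidef) : 0 ≤ (A * B).trace.re := by
  obtain ⟨C, rfl⟩ := CStarAlgebra.nonneg_iff_eq_star_mul_self.mp hA.nonneg
  rw [mul_assoc, trace_mul_comm]
  exact (Complex.le_def.mp (hB.mul_mul_conjTranspose_same C).trace_nonneg).1


lemma IsHermitian.trace_cfc {A : Matrix n n ℂ} (hA : A.IsHermitian) (f : ℝ → ℝ) :
    (cfc f A).trace = ∑ i, (f (hA.eigenvalues i) : ℂ) := by
  rw [hA.cfc_eq, IsHermitian.cfc, Unitary.conjStarAlgAut_apply, trace_mul_cycle,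
    Unitary.coe_star_mul_self, one_mul, trace_diagonal]
  rfl

lemma IsHermitian.re_trace_cfc {A : Matrix n n ℂ} (hA : A.IsHermitian) (f : ℝ → ℝ) :
    (cfc f A).trace.re = ∑ i, f (hA.eigenvalues i) := by
  simp [hA.trace_cfc]

lemma IsHermitian.re_trace_eq_sum_eigenvalues {A : Matrix n n ℂ} (hA : A.IsHermitian) :
    A.trace.re = ∑ i, hA.eigenvalues i := by
  simp [hA.trace_eq_sum_eigenvalues]

lemma IsHermitian.re_trace_mul_self_eq_sum_sq_eigenvalues {A : Matrix n n ℂ}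
    (hA : A.IsHermitian) : (A * A).trace.re = ∑ i, hA.eigenvalues i ^ 2 := by
  rw [← hA.re_trace_cfc (· ^ 2), cfc_pow_id A 2 hA.isSelfAdjoint, sq]

lemma PosSemidef.re_trace_mul_self_le {A : Matrix n n ℂ} (hA : A.PosSemidef) :
    (A * A).trace.re ≤ A.trace.re ^ 2 := by
  rw [hA.1.re_trace_mul_self_eq_sum_sq_eigenvalues, hA.1.re_trace_eq_sum_eigenvalues]
  exact Finset.sum_sq_le_sq_sum_of_nonneg fun i _ => hA.eigenvalues_nonneg i

lemma IsHermitian.sq_re_trace_le {A : Matrix n n ℂ} (hA : A.IsHermitian) :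
    A.trace.re ^ 2 ≤ Fintype.card n * (A * A).trace.re := by
  rw [hA.re_trace_mul_self_eq_sum_sq_eigenvalues, hA.re_trace_eq_sum_eigenvalues]
  exact sq_sum_le_card_mul_sum_sq

lemma IsHermitian.re_trace_mul_le_sum_max_eigenvalues_zero {D E : Matrix n n ℂ}
    (hD : D.IsHermitian) (hE : E.PosSemidef) (hE1 : (1 - E).PosSemidef) :
    (E * D).trace.re ≤ ∑ i, max (hD.eigenvalues i) 0 := by
  set P := cfc (fun x : ℝ => max x 0) D
  set N := cfc (fun x : ℝ => max (-x) 0) D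
  have hP : P.PosSemidef := (cfc_nonneg fun x _ => le_max_right x 0).posSemidef
  have hN : N.PosSemidef := (cfc_nonneg fun x _ => le_max_right (-x) 0).posSemidef
  have hPN : P - N = D :=
    calc P - N = cfc (fun x : ℝ => max x 0 - max (-x) 0) D := (cfc_sub ..).symm
      _ = cfc id D := cfc_congr fun x _ => max_zero_sub_max_neg_zero_eq_self x
      _ = D := cfc_id ℝ D
  have hED : (E * D).trace.re = (E * P).trace.re - (E * N).trace.re := by
    rw [← hPN, mul_sub, trace_sub, Complex.sub_re]
  have hEN := hE.re_trace_mul_nonneg hN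
  have hEP := hE1.re_trace_mul_nonneg hP
  rw [sub_mul, one_mul, trace_sub, Complex.sub_re] at hEP
  have hPtr := hD.re_trace_cfc (fun x : ℝ => max x 0)
  linarith

end Matrix

lemma traceNorm_eq_re_trace_cfc_sqrt (A : Matrix (Fin 2) (Fin 2) ℂ) :
    traceNorm A = (cfc Real.sqrt (Aᴴ * A)).trace.re := by
  rw [(posSemidef_conjTranspose_mul_self A).1.cfc_eq]
  rfl

lemma Matrix.IsHermitian.traceNorm_eq_sum_abs_eigenvalues {D : Matrix (Fin 2) (Fin 2) ℂ}
    (hD : D.IsHermitian) : traceNorm D = ∑ i, |hD.eigenvalues i| := by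
  rw [traceNorm_eq_re_trace_cfc_sqrt, hD.eq, ← sq,
    ← cfc_comp_pow Real.sqrt 2 D Real.continuous_sqrt.continuousOn, hD.re_trace_cfc]
  simp [Real.sqrt_sq_eq_abs]

lemma Matrix.IsHermitian.re_trace_mul_le_traceNorm_add_re_trace {D E : Matrix (Fin 2) (Fin 2) ℂ}
    (hD : D.IsHermitian) (hE : E.PosSemidef) (hE1 : (1 - E).PosSemidef) :
    (E * D).trace.re ≤ (traceNorm D + D.trace.re) / 2 := by
  rw [hD.traceNorm_eq_sum_abs_eigenvalues, hD.re_trace_eq_sum_eigenvalues,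
    ← Finset.sum_add_distrib, Finset.sum_div]
  refine (hD.re_trace_mul_le_sum_max_eigenvalues_zero hE hE1).trans_eq
    (Finset.sum_congr rfl fun i _ => ?_)
  rcases le_total (hD.eigenvalues i) 0 with h | h <;> simp [h, abs_of_nonpos, abs_of_nonneg]

lemma abs_add_abs_le_of_add_eq_neg_one {a b : ℝ} (h : a + b = -1) :
    |a| + |b| ≤ (2 * (a ^ 2 + b ^ 2) + 3) / 4 := by
  rcases abs_cases a with ⟨ha, _⟩ | ⟨ha, _⟩ <;> rcases abs_cases b with ⟨hb, _⟩ | ⟨hb, _⟩ <;>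
    rw [ha, hb] <;> nlinarith [sq_nonneg (a - b), sq_nonneg (a - b - 2), sq_nonneg (b - a - 2)]

lemma Matrix.IsHermitian.traceNorm_le {D : Matrix (Fin 2) (Fin 2) ℂ} (hD : D.IsHermitian)
    (htr : D.trace.re = -1) : traceNorm D ≤ (2 * (D * D).trace.re + 3) / 4 := by
  rw [hD.re_trace_eq_sum_eigenvalues, Fin.sum_univ_two] at htr
  rw [hD.traceNorm_eq_sum_abs_eigenvalues, hD.re_trace_mul_self_eq_sum_sq_eigenvalues,
    Fin.sum_univ_two, Fin.sum_univ_two]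
  exact abs_add_abs_le_of_add_eq_neg_one htr

lemma cyclic_sum_sub_sub_mul_self_add_mul_self {R : Type*} [Ring R] (x y z : R) :
    (x - y - z) * (x - y - z) + (y - z - x) * (y - z - x) + (z - x - y) * (z - x - y) +
      (x + y + z) * (x + y + z) = 4 • (x * x + y * y + z * z) := by
  noncomm_ring

lemma sum_ite_re_trace_mul_eq {n : Type*} [Fintype n] [DecidableEq n]
    (ρ E : Fin 3 → Matrix n n ℂ) (hρ1 : ∀ i, (ρ i).trace = 1) :
    (∑ a : Fin 3, ∑ b : Fin 3, (1 / 9 : ℝ) *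
        (if a = b then (E b * ρ a).trace.re else ((1 - E b) * ρ a).trace.re)) =
      2 / 3 + 1 / 9 * ∑ b : Fin 3, (E b * (ρ b - ρ (b + 1) - ρ (b + 2))).trace.re := by
  simp only [one_div, sub_mul, one_mul, trace_sub, hρ1, Complex.sub_re, Complex.one_re, mul_ite,
    mul_sub, mul_one, Fin.sum_univ_three, Fin.isValue, ↓reduceIte, zero_ne_one, Fin.reduceEq,
    one_ne_zero, Finset.sum_sub_distrib, zero_add, Fin.reduceAdd]
  ring

lemma sum_traceNorm_le_six (ρ : Fin 3 → Matrix (Fin 2) (Fin 2) ℂ)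
    (hρ : ∀ i, (ρ i).PosSemidef) (hρ1 : ∀ i, (ρ i).trace = 1) :
    ∑ i : Fin 3, traceNorm (ρ i - ρ (i + 1) - ρ (i + 2)) ≤ 6 := by
  have hnorm (i : Fin 3) := (((hρ i).1.sub (hρ (i + 1)).1).sub (hρ (i + 2)).1).traceNorm_le
    (by simp [trace_sub, hρ1])
  have hpure (i : Fin 3) : (ρ i * ρ i).trace.re ≤ 1 := by
    simpa [hρ1] using (hρ i).re_trace_mul_self_le
  have hmixed : 9 / 2 ≤ ((ρ 0 + ρ 1 + ρ 2) * (ρ 0 + ρ 1 + ρ 2)).trace.re := by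
    have h := (((hρ 0).1.add (hρ 1).1).add (hρ 2).1).sq_re_trace_le
    simp only [trace_add, hρ1, Complex.add_re, Complex.one_re, Fintype.card_fin,
      Nat.cast_ofNat] at h
    linarith
  have hcyclic := congrArg (fun M => M.trace.re)
    (cyclic_sum_sub_sub_mul_self_add_mul_self (ρ 0) (ρ 1) (ρ 2))
  rw [trace_smul] at hcyclic
  simp only [trace_add, nsmul_eq_mul, Nat.cast_ofNat, Complex.mul_re, Complex.add_re,
    Complex.re_ofNat, Complex.im_ofNat, zero_mul, sub_zero] at hcyclic
  have h0 := hnorm 0; have h1 := hnorm 1; have h2 := hnorm 2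
  simp only [Fin.sum_univ_three, Fin.reduceAdd] at h0 h1 h2 ⊢
  linarith [hpure 0, hpure 1, hpure 2]

/-- Discrimination experiment for the 32-Game: for any qubit density matrices
ρ₀,ρ₁,ρ₂ and any POVM elements E_b (0 ≤ E_b ≤ I) used by Bob, the success
probability satisfies
p_guess ≤ 1/2 + (1/18)·Σᵢ ‖ρᵢ − ρ_{i+1} − ρ_{i+2}‖₁ ≤ 5/6. -/
theorem stmt_11 (ρ : Fin 3 → Matrix (Fin 2) (Fin 2) ℂ)
    (hρ : ∀ i, (ρ i).PosSemidef) (hρ1 : ∀ i, (ρ i).trace = 1)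
    (E : Fin 3 → Matrix (Fin 2) (Fin 2) ℂ)
    (hE : ∀ b, (E b).PosSemidef) (hE1 : ∀ b, (1 - E b).PosSemidef) :
    (∑ a : Fin 3, ∑ b : Fin 3,
        (1 / 9 : ℝ) *
          (if a = b then (E b * ρ a).trace.re else ((1 - E b) * ρ a).trace.re)) ≤
        1 / 2 + 1 / 18 * ∑ i : Fin 3, traceNorm (ρ i - ρ (i + 1) - ρ (i + 2)) ∧
      1 / 2 + 1 / 18 * (∑ i : Fin 3, traceNorm (ρ i - ρ (i + 1) - ρ (i + 2))) ≤ 5 / 6 := by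
  have hhelstrom : ∑ b : Fin 3, (E b * (ρ b - ρ (b + 1) - ρ (b + 2))).trace.re ≤
      ∑ b : Fin 3, (traceNorm (ρ b - ρ (b + 1) - ρ (b + 2)) - 1) / 2 := by
    refine Finset.sum_le_sum fun b _ => ?_
    have htr : (ρ b - ρ (b + 1) - ρ (b + 2)).trace.re = -1 := by simp [trace_sub, hρ1]
    have hD := ((hρ b).1.sub (hρ (b + 1)).1).sub (hρ (b + 2)).1
    exact (hD.re_trace_mul_le_traceNorm_add_re_trace (hE b) (hE1 b)).trans_eq (by rw [htr]; ring)
  have hsum := sum_traceNorm_le_six ρ hρ hρ1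
  rw [sum_ite_re_trace_mul_eq ρ E hρ1]
  simp only [Fin.sum_univ_three] at hhelstrom hsum ⊢
  constructor <;> linarith
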